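/- Let X and Y be metric spaces and f a multifunction from X to Y such that f x is a compact subset of Y for every x ∈ X. If f is uniformly weakly continuous, then f is weakly continuous. -/
import Mathlib


/-- If a pointwise compact multifunction between metric spaces is uniformly weakly
continuous, then it is weakly continuous. -/
theorem uniformWeak_implies_weak {X Y : Type*} [MetricSpace X] [MetricSpace Y]
    (f : X → Set Y) (hcpt : ∀ x : X, IsCompact (f x))
    (huwc : ∀ ε > (0:ℝ), ∃ δ > (0:ℝ), ∀ x, (f x).Nonempty → ∃ y ∈ f x,
      ∀ x', (f x').Nonempty → dist x x' < δ → ∃ y' ∈ f x', dist y y' < ε) :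
    ∀ x, (f x).Nonempty → ∃ y ∈ f x, ∀ ε > (0:ℝ), ∃ δ > (0:ℝ),
      ∀ x', (f x').Nonempty → dist x x' < δ → ∃ y' ∈ f x', dist y y' < ε := by
  intro x hx
  have H : ∀ n : ℕ, ∃ δ > (0:ℝ), ∃ y ∈ f x, ∀ x', (f x').Nonempty →
      dist x x' < δ → ∃ y' ∈ f x', dist y y' < 1 / (n + 1) := by
    intro n
    obtain ⟨δ, hδ, h⟩ := huwc (1 / (n + 1)) (by positivity)
    obtain ⟨y, hy, hy'⟩ := h x hx
    exact ⟨δ, hδ, y, hy, hy'⟩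
  choose δ hδ y hy hprop using H
  obtain ⟨z, hz, φ, hφ, hconv⟩ := (hcpt x).tendsto_subseq hy
  refine ⟨z, hz, ?_⟩
  intro ε hε
  obtain ⟨N1, hN1⟩ := Metric.tendsto_atTop.mp hconv (ε / 2) (by linarith)
  obtain ⟨N2, hN2⟩ := exists_nat_gt (2 / ε)
  set k := max N1 N2 with hk
  refine ⟨δ (φ k), hδ _, ?_⟩
  intro x' hx' hd
  obtain ⟨y', hy', hdy⟩ := hprop (φ k) x' hx' hd
  refine ⟨y', hy', ?_⟩
  have h1 : dist (y (φ k)) z < ε / 2 := hN1 k (le_max_left _ _)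
  have hk2 : (N2 : ℝ) ≤ (φ k : ℝ) := by
    exact_mod_cast le_trans (le_max_right N1 N2) (hφ.le_apply)
  have h2 : 1 / ((φ k : ℝ) + 1) < ε / 2 := by
    rw [div_lt_div_iff₀ (by positivity) (by norm_num)]
    have : 2 / ε < (φ k : ℝ) + 1 := by linarith
    rw [div_lt_iff₀ hε] at this
    linarith
  calc dist z y' ≤ dist z (y (φ k)) + dist (y (φ k)) y' := dist_triangle _ _ _
    _ < ε / 2 + ε / 2 := by rw [dist_comm z]; exact add_lt_add h1 (lt_trans hdy h2)
    _ = ε := by ring
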